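/- arXiv:2302.01191 — 2 statements merged into one kernel-verified Lean document; each statement's English description precedes it below -/
import Mathlib

section
/- Let A ⊂ ℂ^{d×d} be the set of circulant matrices. For x ∈ A^N, let x̂^j ∈ ℂ^N denote the vector of j-th eigenvalues, (x̂^j)_k = λ(x_k)_j. Let H ≥ 1, W_i ∈ A^{N_i × N_{i−1}} for i = 1, …, H, and let σ_i : A^{N_i} → A^{N_i} satisfy σ_i(x)^̂j = σ̂_i(x̂^j) for some σ̂_i : ℂ^{N_i} → ℂ^{N_i} and all j. Then the network f = σ_H ∘ W_H ∘ ⋯ ∘ σ_1 ∘ W_1 decomposes into d Fourier-component sub-networks: for every x ∈ A^{N_0} and every j with 0 ≤ j ≤ d−1, the j-th eigenvalue vector of f(x) equals σ̂_H(Ŵ_H^j( ⋯ σ̂_1(Ŵ_1^j x̂^j) ⋯ )), where Ŵ_i^j ∈ ℂ^{N_i×N_{i−1}} has (k,l)-entry λ((W_i)_{kl})_j. -/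
/-! For a fixed frequency `j`, the map `a ↦ λ(a)_j` is a ring homomorphism from the subring of
circulant matrices to `ℂ`: the discrete Fourier transform turns the circular convolution
`circulant c * circulant c' = circulant (circulant c *ᵥ c')` into a pointwise product. Any network
is carried by a ring homomorphism intertwining the activations to the network of the images, so
running the circulant network inside that subring and applying `λ(·)_j` gives the `j`-th
Fourier-component network. -/

open Matrix

/-- The C*-algebra network `f = σ_H ∘ W_H ∘ ⋯ ∘ σ_1 ∘ W_1` (without biases):
`netFwd N W σ x i` is the output after `i` layers, where each linear layer acts by
`(W_i y)_k = Σ_l (W_i)_{kl} y_l`. -/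
noncomputable def netFwd {R : Type} [NonUnitalNonAssocSemiring R] (N : ℕ → ℕ)
    (W : ∀ i : ℕ, Fin (N (i + 1)) → Fin (N i) → R)
    (σ : ∀ i : ℕ, (Fin (N (i + 1)) → R) → (Fin (N (i + 1)) → R))
    (x : Fin (N 0) → R) : (i : ℕ) → Fin (N i) → R
  | 0 => x
  | (i + 1) => σ i fun k => ∑ l, W i k l * netFwd N W σ x i l

/-- A matrix `a ∈ ℂ^{d×d}` is circulant if there exists `c ∈ ℂ^d` such that
`a j k = c ((j−k) mod d)` (here `j - k` is subtraction in `Fin d`, i.e. mod d). -/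
def IsCirculant {d : ℕ} (a : Matrix (Fin d) (Fin d) ℂ) : Prop :=
  ∃ c : Fin d → ℂ, a = Matrix.circulant c

/-- The eigenvalue vector of a circulant matrix `a`, computed from its first
column `c i = a i 0`: `λ(a)_k = Σ_{i=0}^{d−1} c_i ω^{ik}` where ω = exp(2πi/d). -/
noncomputable def eigMap (d : ℕ) [NeZero d] (a : Matrix (Fin d) (Fin d) ℂ) :
    Fin d → ℂ :=
  fun k => ∑ i : Fin d,
    a i 0 * Complex.exp (2 * (Real.pi : ℂ) * Complex.I / (d : ℂ)) ^ (i.val * k.val)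

theorem pow_val_add_mul_of_pow_eq_one {M : Type*} [Monoid M] {d : ℕ} [NeZero d] {ω : M}
    (hω : ω ^ d = 1) (a b : Fin d) (n : ℕ) : ω ^ ((a + b).val * n) = ω ^ (a.val * n) * ω ^ (b.val * n) := by
  rw [← pow_add, ← add_mul, pow_eq_pow_mod _ hω, Fin.val_add, Nat.mod_mul_mod,
    ← pow_eq_pow_mod _ hω]

section Circulant

variable {d : ℕ} [NeZero d]

theorem eigMap_circulant (c : Fin d → ℂ) (j : Fin d) :
    eigMap d (circulant c) j = ∑ i, c i *
      Complex.exp (2 * (Real.pi : ℂ) * Complex.I / (d : ℂ)) ^ (i.val * j.val) := by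
  simp only [eigMap, circulant_col_zero_eq]

theorem eigMap_circulant_mul (c c' : Fin d → ℂ) (j : Fin d) :
    eigMap d (circulant c * circulant c') j =
      eigMap d (circulant c) j * eigMap d (circulant c') j := by
  have hω : Complex.exp (2 * (Real.pi : ℂ) * Complex.I / (d : ℂ)) ^ d = 1 :=
    (Complex.isPrimitiveRoot_exp d (NeZero.ne d)).pow_eq_one
  rw [circulant_mul, eigMap_circulant, eigMap_circulant, eigMap_circulant, Finset.sum_mul_sum,
    Finset.sum_comm]
  simp only [mulVec, dotProduct, circulant_apply, Finset.sum_mul]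
  rw [Finset.sum_comm]
  refine Finset.sum_congr rfl fun k _ => ?_
  rw [← Equiv.sum_comp (Equiv.addRight k)]
  refine Finset.sum_congr rfl fun i _ => ?_
  rw [Equiv.coe_addRight, add_sub_cancel_right, pow_val_add_mul_of_pow_eq_one hω]
  ring

theorem eigMap_add (a b : Matrix (Fin d) (Fin d) ℂ) :
    eigMap d (a + b) = eigMap d a + eigMap d b := by
  ext j; simp [eigMap, add_mul, Finset.sum_add_distrib]

theorem eigMap_one : eigMap d (1 : Matrix (Fin d) (Fin d) ℂ) = 1 := by
  ext j; simp [eigMap, one_apply]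

variable (d) in
def circulantSubring : Subring (Matrix (Fin d) (Fin d) ℂ) where
  carrier := {a | IsCirculant a}
  mul_mem' := by
    rintro _ _ ⟨c, rfl⟩ ⟨c', rfl⟩
    exact ⟨_, circulant_mul c c'⟩
  one_mem' := ⟨_, (circulant_single_one ℂ (Fin d)).symm⟩
  add_mem' := by
    rintro _ _ ⟨c, rfl⟩ ⟨c', rfl⟩
    exact ⟨_, (circulant_add c c').symm⟩
  zero_mem' := ⟨0, (circulant_zero ℂ (Fin d)).symm⟩
  neg_mem' := by
    rintro _ ⟨c, rfl⟩
    exact ⟨_, (circulant_neg c).symm⟩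

variable (d) in
noncomputable def circulantEigRingHom (j : Fin d) : circulantSubring d →+* ℂ where
  toFun a := eigMap d a j
  map_one' := congrFun eigMap_one j
  map_mul' := by
    rintro ⟨_, c, rfl⟩ ⟨_, c', rfl⟩
    exact eigMap_circulant_mul c c' j
  map_zero' := by simp [eigMap]
  map_add' a b := congrFun (eigMap_add a b) j

end Circulant

theorem map_netFwd {R S F : Type} [NonUnitalNonAssocSemiring R] [NonUnitalNonAssocSemiring S]
    [FunLike F R S] [NonUnitalRingHomClass F R S] (φ : F) (N : ℕ → ℕ)
    (W : ∀ i : ℕ, Fin (N (i + 1)) → Fin (N i) → R)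
    (σ : ∀ i : ℕ, (Fin (N (i + 1)) → R) → (Fin (N (i + 1)) → R))
    (σ' : ∀ i : ℕ, (Fin (N (i + 1)) → S) → (Fin (N (i + 1)) → S))
    (hσ : ∀ i y, φ ∘ σ i y = σ' i (φ ∘ y)) (x : Fin (N 0) → R) (i : ℕ) :
    φ ∘ netFwd N W σ x i = netFwd N (fun i k l => φ (W i k l)) σ' (φ ∘ x) i := by
  induction i with
  | zero => rfl
  | succ i ih =>
    rw [netFwd, netFwd, hσ, ← ih]
    congr 1
    funext k
    simp only [Function.comp_apply, map_sum, map_mul]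

theorem circulant_cstar_net_decomposition_general (d : ℕ) [NeZero d] (H : ℕ)
    (N : ℕ → ℕ)
    (W : ∀ i : ℕ, Fin (N (i + 1)) → Fin (N i) → Matrix (Fin d) (Fin d) ℂ)
    (σ : ∀ i : ℕ, (Fin (N (i + 1)) → Matrix (Fin d) (Fin d) ℂ) →
      (Fin (N (i + 1)) → Matrix (Fin d) (Fin d) ℂ))
    (σh : ∀ i : ℕ, (Fin (N (i + 1)) → ℂ) → (Fin (N (i + 1)) → ℂ))
    (hW : ∀ i k l, IsCirculant (W i k l))
    (hσcirc : ∀ i (y : Fin (N (i + 1)) → Matrix (Fin d) (Fin d) ℂ),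
      (∀ k, IsCirculant (y k)) → ∀ k, IsCirculant (σ i y k))
    (hσ : ∀ i (y : Fin (N (i + 1)) → Matrix (Fin d) (Fin d) ℂ),
      (∀ k, IsCirculant (y k)) → ∀ j : Fin d,
        (fun k => eigMap d (σ i y k) j) = σh i (fun k => eigMap d (y k) j))
    (x : Fin (N 0) → Matrix (Fin d) (Fin d) ℂ) (hx : ∀ k, IsCirculant (x k))
    (j : Fin d) :
    (fun k => eigMap d (netFwd N W σ x H k) j) =
      netFwd N (fun i k l => eigMap d (W i k l) j) σh
        (fun k => eigMap d (x k) j) H := by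
  let A := circulantSubring d
  let σA i (y : Fin (N (i + 1)) → A) k : A :=
    ⟨σ i (Subtype.val ∘ y) k, hσcirc i _ (fun k => (y k).2) k⟩
  let WA i k l : A := ⟨W i k l, hW i k l⟩
  let xA k : A := ⟨x k, hx k⟩
  have hlift : netFwd N W σ x H = A.subtype ∘ netFwd N WA σA xA H :=
    (map_netFwd A.subtype N WA σA σ (fun _ _ => rfl) xA H).symm
  rw [hlift]
  exact map_netFwd (circulantEigRingHom d j) N WA σA σh
    (fun i y => hσ i _ (fun k => (y k).2) j) xA H

/-- Over the algebra `A` of circulant matrices in ℂ^{d×d}, a C*-algebra network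
with circulant weights and activations acting Fourier-componentwise
(`λ(σ_i(x))^j = σ̂_i(x̂^j)`) decomposes into `d` Fourier-component sub-networks:
the j-th eigenvalue vector of `f(x)` equals
`σ̂_H(Ŵ_H^j(⋯ σ̂_1(Ŵ_1^j x̂^j) ⋯))`, where `(Ŵ_i^j)_{kl} = λ((W_i)_{kl})_j`. -/
theorem circulant_cstar_net_decomposition (d : ℕ) [NeZero d] (H : ℕ) (hH : 1 ≤ H)
    (N : ℕ → ℕ)
    (W : ∀ i : ℕ, Fin (N (i + 1)) → Fin (N i) → Matrix (Fin d) (Fin d) ℂ)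
    (σ : ∀ i : ℕ, (Fin (N (i + 1)) → Matrix (Fin d) (Fin d) ℂ) →
      (Fin (N (i + 1)) → Matrix (Fin d) (Fin d) ℂ))
    (σh : ∀ i : ℕ, (Fin (N (i + 1)) → ℂ) → (Fin (N (i + 1)) → ℂ))
    (hW : ∀ i k l, IsCirculant (W i k l))
    (hσcirc : ∀ i (y : Fin (N (i + 1)) → Matrix (Fin d) (Fin d) ℂ),
      (∀ k, IsCirculant (y k)) → ∀ k, IsCirculant (σ i y k))
    (hσ : ∀ i (y : Fin (N (i + 1)) → Matrix (Fin d) (Fin d) ℂ),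
      (∀ k, IsCirculant (y k)) → ∀ j : Fin d,
        (fun k => eigMap d (σ i y k) j) = σh i (fun k => eigMap d (y k) j))
    (x : Fin (N 0) → Matrix (Fin d) (Fin d) ℂ) (hx : ∀ k, IsCirculant (x k))
    (j : Fin d) :
    (fun k => eigMap d (netFwd N W σ x H k) j) =
      netFwd N (fun i k l => eigMap d (W i k l) j) σh
        (fun k => eigMap d (x k) j) H :=
  circulant_cstar_net_decomposition_general d H N W σ σh hW hσcirc hσ x hx j
end

section
/- Let d, N_0, N_1 ≥ 1, σ : ℝ → ℝ, and suppose given real vectors w_{ij} ∈ ℝ^{N_0 d}, real scalars b_{ij} ∈ ℝ, and real scalars t_{ikj} ∈ ℝ for 1 ≤ i ≤ N_1 and 1 ≤ j, k ≤ d. Define W_2 ∈ (ℂ^{d×d})^{N_1} by ((W_2)_i)_{jk} = t_{ikj}, define W_1 ∈ (ℂ^{d×d})^{N_1×N_0} by ((W_1)_{im})_{jl} = (w_{ij})_{md+l}, and define b ∈ (ℂ^{d×d})^{N_1} by (b_i)_{jl} = b_{ij}. Then the shallow C*-algebra network f(x) = W_2^* σ(W_1 x + b) = Σ_i ((W_2)_i)^*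 σ((W_1 x)_i + b_i), with σ applied entrywise to each matrix, satisfies for every x ∈ (ℂ^{d×d})^{N_0} and all k, l: f(x)_{kl} = Σ_{j=1}^{d} Σ_{i=1}^{N_1} t_{ikj} σ(w_{ij}^⊤ x^l + b_{ij}), where x^l ∈ ℂ^{N_0 d} is the l-th column of x regarded as an N_0 d × d matrix (obtained by stacking the matrices x_1, …, x_{N_0}). -/
open Matrix

/-- The index `m*d + l` of the l-th column entry of the m-th matrix when a vector
in `(ℂ^{d×d})^{N0}` is regarded as an `N0 d × d` matrix by vertical stacking. -/
def stackIdx {N0 d : ℕ} (m : Fin N0) (p : Fin d) : Fin (N0 * d) :=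
  ⟨m.val * d + p.val, by
    have hm : m.val + 1 ≤ N0 := m.isLt
    have hp : p.val < d := p.isLt
    calc m.val * d + p.val < m.val * d + d := by omega
      _ = (m.val + 1) * d := by ring
      _ ≤ N0 * d := Nat.mul_le_mul_right d hm⟩

/-- The entrywise action on ℂ (identified with ℝ²) of an activation σ : ℝ → ℝ. -/
noncomputable def cExt (σ : ℝ → ℝ) (z : ℂ) : ℂ :=
  (σ z.re : ℂ) + (σ z.im : ℂ) * Complex.I

theorem sum_conjTranspose_ofReal_mul_apply {ι m n o : Type*} [Fintype ι] [Fintype n]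
    (t : ι → m → n → ℝ) (M : ι → Matrix n o ℂ) (k : m) (l : o) :
    (∑ i, (Matrix.of fun j k' => (t i k' j : ℂ))ᴴ * M i) k l =
      ∑ j, ∑ i, (t i k j : ℂ) * M i j l := by
  simp only [Matrix.sum_apply, mul_apply, conjTranspose_apply, of_apply, Complex.star_def,
    Complex.conj_ofReal]
  exact Finset.sum_comm

theorem sum_mul_add_bias_apply {ι m n o : Type*} [Fintype ι] [Fintype m]
    (W : ι → Matrix n m ℂ) (x : ι → Matrix m o ℂ) (c : n → ℂ) (j : n) (l : o) :
    ((∑ i, W i * x i) + Matrix.of fun j' (_ : o) => c j') j l =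
      (∑ i, ∑ p, W i j p * x i p l) + c j := by
  simp only [Matrix.add_apply, Matrix.sum_apply, mul_apply, of_apply]

theorem shallow_cstar_net_representation_general (d N0 N1 : ℕ)
    (σ : ℝ → ℝ)
    (w : Fin N1 → Fin d → (Fin (N0 * d) → ℝ))
    (b : Fin N1 → Fin d → ℝ)
    (t : Fin N1 → Fin d → Fin d → ℝ)
    (x : Fin N0 → Matrix (Fin d) (Fin d) ℂ) (k l : Fin d) :
    (∑ i : Fin N1,
        (Matrix.of fun j k' => (t i k' j : ℂ))ᴴ *
          (Matrix.of fun p q =>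
            cExt σ
              ((((∑ m : Fin N0,
                  (Matrix.of fun j' l' => (w i j' (stackIdx m l') : ℂ)) * x m) +
                Matrix.of fun j' _ => (b i j' : ℂ) :
                Matrix (Fin d) (Fin d) ℂ) p q)))) k l =
      ∑ j : Fin d, ∑ i : Fin N1,
        (t i k j : ℂ) *
          cExt σ
            ((∑ m : Fin N0, ∑ p : Fin d, (w i j (stackIdx m p) : ℂ) * x m p l) +
              (b i j : ℂ)) := by
  rw [sum_conjTranspose_ofReal_mul_apply]
  simp only [of_apply, sum_mul_add_bias_apply]

/-- The shallow C*-algebra network `f(x) = W_2^* σ(W_1 x + b)` over `A = ℂ^{d×d}`,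
with `((W_2)_i)_{jk} = t_{ikj}`, `((W_1)_{im})_{jl} = (w_{ij})_{md+l}`,
`(b_i)_{jl} = b_{ij}`, and σ applied entrywise, satisfies
`f(x)_{kl} = Σ_{j=1}^{d} Σ_{i=1}^{N_1} t_{ikj} σ(w_{ij}^⊤ x^l + b_{ij})`,
where `x^l ∈ ℂ^{N_0 d}` is the l-th column of `x` regarded as an `N_0 d × d`
matrix. -/
theorem shallow_cstar_net_representation (d N0 N1 : ℕ)
    (hd : 1 ≤ d) (hN0 : 1 ≤ N0) (hN1 : 1 ≤ N1) (σ : ℝ → ℝ)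
    (w : Fin N1 → Fin d → (Fin (N0 * d) → ℝ))
    (b : Fin N1 → Fin d → ℝ)
    (t : Fin N1 → Fin d → Fin d → ℝ)
    (x : Fin N0 → Matrix (Fin d) (Fin d) ℂ) (k l : Fin d) :
    (∑ i : Fin N1,
        (Matrix.of fun j k' => (t i k' j : ℂ))ᴴ *
          (Matrix.of fun p q =>
            cExt σ
              ((((∑ m : Fin N0,
                  (Matrix.of fun j' l' => (w i j' (stackIdx m l') : ℂ)) * x m) +
                Matrix.of fun j' _ => (b i j' : ℂ) :
                Matrix (Fin d) (Fin d) ℂ) p q)))) k l =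
      ∑ j : Fin d, ∑ i : Fin N1,
        (t i k j : ℂ) *
          cExt σ
            ((∑ m : Fin N0, ∑ p : Fin d, (w i j (stackIdx m p) : ℂ) * x m p l) +
              (b i j : ℂ)) :=
  shallow_cstar_net_representation_general d N0 N1 σ w b t x k l
end
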